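/- arXiv:1411.4404 — 6 statements merged into one kernel-verified Lean document; each statement's English description precedes it below -/
import Mathlib

section
/- Let V be an n-dimensional real inner product space with n ≥ 3. The linear map A ↦ A ∧ id from bilinear forms on V to Λ²V* ⊗ so(V) (the suspension defined by (A ∧ id)_{X,Y} := A(Y,·) ∧ X − A(X,·) ∧ Y) is injective. -/
noncomputable section

/-- `V n` is the model `n`-dimensional real inner product space. -/
abbrev V (n : ℕ) := EuclideanSpace ℝ (Fin n)

/-- The standard orthonormal basis of `V n`. -/
def ee (n : ℕ) (i : Fin n) : V n := EuclideanSpace.single i 1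

/-- The vector dual to a (linear) functional `f`, `⟨sharpF f, z⟩ = f z`. -/
def sharpF {n : ℕ} (f : V n → ℝ) : V n := ∑ i, f (ee n i) • ee n i

/-- The suspension `(A ∧ id)_{X,Y}(Z) := (A(Y,·) ∧ X)(Z) − (A(X,·) ∧ Y)(Z)`,
where `(α ∧ X)(Z) := α(Z)X − ⟨X,Z⟩α♯`. -/
def susp {n : ℕ} (A : V n → V n → ℝ) (x y z : V n) : V n :=
  (A y z • x - (inner ℝ x z : ℝ) • sharpF (A y))
    - (A x z • y - (inner ℝ y z : ℝ) • sharpF (A x))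

/-- The Ricci contraction `ric(R)(X,Y) := tr (Z ↦ R_{Z,X}Y)`. -/
def ricci {n : ℕ} (R : V n → V n → V n → V n) (x y : V n) : ℝ :=
  ∑ i, (inner ℝ (R (ee n i) x y) (ee n i) : ℝ)

/-
Since `susp` is linear in the form, it suffices to show that `susp C = 0` forces `C = 0`.
Pairing `susp C (eᵢ, eₐ, e_b)` with `eᵢ` for an index `i ∉ {a, b}` (available because `n ≥ 3`)
gives `C(eₐ, e_b) + δₐ_b C(eᵢ, eᵢ) = 0`. Off the diagonal this is `C(eₐ, e_b) = 0`; on it,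
the relations `Cₐₐ + Cₚₚ = Cₐₐ + C_qq = Cₚₚ + C_qq = 0` for three distinct indices give `Cₐₐ = 0`.
-/

open EuclideanSpace
open scoped InnerProductSpace

section

variable {n : ℕ}

lemma ee_eq_basisFun : ee n = basisFun (Fin n) ℝ := by
  funext i
  simp [ee, basisFun_apply]

lemma sharpF_sub (f g : V n → ℝ) : sharpF (f - g) = sharpF f - sharpF g := by
  simp [sharpF, sub_smul, Finset.sum_sub_distrib]

lemma susp_sub (A B : V n → V n → ℝ) : susp (A - B) = susp A - susp B := by
  funext x y z
  simp only [susp, Pi.sub_apply, sharpF_sub, sub_smul, smul_sub]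
  abel

lemma inner_sharpF (f : V n →ₗ[ℝ] ℝ) (w : V n) : ⟪sharpF f, w⟫_ℝ = f w := by
  conv_rhs => rw [← (basisFun (Fin n) ℝ).sum_repr' w]
  simp [sharpF, ee_eq_basisFun, sum_inner, real_inner_smul_left, mul_comm]

lemma inner_susp (C : V n →ₗ[ℝ] V n →ₗ[ℝ] ℝ) (x y z w : V n) :
    ⟪susp (fun a b => C a b) x y z, w⟫_ℝ
      = C y z * ⟪x, w⟫_ℝ - ⟪x, z⟫_ℝ * C y w - C x z * ⟪y, w⟫_ℝ + ⟪y, z⟫_ℝ * C x w := by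
  simp only [susp, inner_sub_left, real_inner_smul_left]
  rw [inner_sharpF (C x), inner_sharpF (C y)]
  ring

lemma eq_zero_of_susp_eq_zero (hn : 3 ≤ n) (C : V n →ₗ[ℝ] V n →ₗ[ℝ] ℝ)
    (hC : susp (fun a b => C a b) = 0) : C = 0 := by
  set e := basisFun (Fin n) ℝ
  have hcard : 3 ≤ ENat.card (Fin n) := by simpa using hn
  have key (i a b : Fin n) (hia : i ≠ a) (hib : i ≠ b) :
      C (e a) (e b) + ⟪e a, e b⟫_ℝ * C (e i) (e i) = 0 := by
    have h := inner_susp C (e i) (e a) (e b) (e i)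
    simp only [hC, Pi.zero_apply, inner_zero_left, e.inner_eq_one, e.inner_eq_zero hib,
      e.inner_eq_zero hia.symm] at h
    linarith
  have diag (a p : Fin n) (hpa : p ≠ a) : C (e a) (e a) + C (e p) (e p) = 0 := by
    simpa [e.inner_eq_one] using key p a a hpa hpa
  refine LinearMap.ext_basis e.toBasis e.toBasis fun a b => ?_
  simp only [OrthonormalBasis.coe_toBasis, LinearMap.zero_apply]
  by_cases hab : a = b
  · subst hab
    obtain ⟨p, hpa, -⟩ := ENat.exists_ne_ne_of_three_le hcard a a
    obtain ⟨q, hqa, hqp⟩ := ENat.exists_ne_ne_of_three_le hcard a p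
    linarith [diag a p hpa, diag a q hqa, diag p q hqp]
  · obtain ⟨i, hia, hib⟩ := ENat.exists_ne_ne_of_three_le hcard a b
    simpa [e.inner_eq_zero hab] using key i a b hia hib

end

/-- For `n ≥ 3`, the suspension map `A ↦ A ∧ id` is injective on bilinear forms. -/
theorem susp_injective {n : ℕ} (hn : 3 ≤ n) (A B : V n →ₗ[ℝ] V n →ₗ[ℝ] ℝ)
    (h : (susp fun a b => A a b) = (susp fun a b => B a b)) : A = B := by
  rw [← sub_eq_zero]
  refine eq_zero_of_susp_eq_zero hn (A - B) ?_
  have hsub : (fun a b => (A - B) a b) = (fun a b => A a b) - (fun a b => B a b) := rfl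
  rw [hsub, susp_sub, h, sub_self]
end
end

section
/- Let V be a 2-dimensional real inner product space. The kernel of the suspension map A ↦ A ∧ id on symmetric bilinear forms on V consists exactly of the trace-free symmetric bilinear forms. -/
noncomputable section

/-!
For fixed `z`, `susp A x y z` is bilinear and alternating in `(x, y)`, so in dimension 2 it is
`det (x, y)` times its value at `(e₀, e₁)`, which a direct computation identifies as `tr A` times
the quarter-turn `(z₁, -z₀)` of `z`. Hence `susp A` vanishes exactly when `tr A` does.
-/

lemma ee_apply {n : ℕ} (i j : Fin n) : ee n i j = if j = i then 1 else 0 :=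
  PiLp.single_apply _ _ _ _ _

lemma sum_smul_ee {n : ℕ} (v : V n) : ∑ i, v i • ee n i = v := by
  simpa [ee] using (EuclideanSpace.basisFun (Fin n) ℝ).sum_repr v

lemma sharpF_apply {n : ℕ} (f : V n → ℝ) (i : Fin n) : sharpF f i = f (ee n i) := by
  simp [sharpF, ee_apply]

lemma bilin_eq_sum_ee {n : ℕ} (A : V n →ₗ[ℝ] V n →ₗ[ℝ] ℝ) (x y : V n) :
    A x y = ∑ i, ∑ j, x i * y j * A (ee n i) (ee n j) := by
  conv_lhs => rw [← sum_smul_ee x, ← sum_smul_ee y]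
  simp only [map_sum, map_smul, LinearMap.sum_apply, LinearMap.smul_apply, smul_eq_mul,
    Finset.mul_sum]
  rw [Finset.sum_comm]
  simp only [mul_left_comm, mul_assoc]

lemma susp_eq_trace_smul (A : V 2 →ₗ[ℝ] V 2 →ₗ[ℝ] ℝ) (x y z : V 2) :
    susp (fun a b => A a b) x y z =
      ((x 0 * y 1 - x 1 * y 0) * ∑ i, A (ee 2 i) (ee 2 i)) • !₂[z 1, -z 0] := by
  ext k
  simp only [susp, PiLp.sub_apply, PiLp.smul_apply, smul_eq_mul, sharpF_apply, PiLp.inner_apply]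
  rw [bilin_eq_sum_ee A y z, bilin_eq_sum_ee A x z, bilin_eq_sum_ee A y, bilin_eq_sum_ee A x]
  fin_cases k <;> simp [Fin.sum_univ_two, ee_apply] <;> ring

theorem susp_kernel_dim_two_general (A : V 2 →ₗ[ℝ] V 2 →ₗ[ℝ] ℝ) :
    (susp fun a b => A a b) = (fun _ _ _ => (0 : V 2)) ↔
      (∑ i, A (ee 2 i) (ee 2 i)) = 0 := by
  simp only [funext_iff, susp_eq_trace_smul]
  constructor
  · intro h
    simpa [ee_apply] using congr($(h (ee 2 0) (ee 2 1) (ee 2 1)) 0)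
  · intro htr x y z
    simp [htr]

/-- In dimension 2, a symmetric bilinear form lies in the kernel of the suspension map
`A ↦ A ∧ id` if and only if it is trace-free. -/
theorem susp_kernel_dim_two (A : V 2 →ₗ[ℝ] V 2 →ₗ[ℝ] ℝ) (hsym : ∀ x y, A x y = A y x) :
    (susp fun a b => A a b) = (fun _ _ _ => (0 : V 2)) ↔
      (∑ i, A (ee 2 i) (ee 2 i)) = 0 :=
  susp_kernel_dim_two_general A
end
end

section
/- Let V be a 2-dimensional real inner product space. Then every element of Λ²V* ⊗ co(V), where co(V) = so(V) ⊕ ℝ·id, satisfies the first Bianchi identity R_{X,Y}Z + R_{Y,Z}X + R_{Z,X}Y = 0. -/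
/-! The Bianchi sum `(x, y, z) ↦ R x y z + R y z x + R z x y` of a map `R` alternating in its
first two arguments is an alternating trilinear form, and such forms vanish on a
space of dimension less than three, since any three vectors in it are linearly dependent. -/

noncomputable section

open Module

theorem AlternatingMap.eq_zero_of_finrank_lt {K M N ι : Type*} [Field K] [AddCommGroup M]
    [Module K M] [FiniteDimensional K M] [AddCommGroup N] [Module K N] [Fintype ι]
    (f : M [⋀^ι]→ₗ[K] N) (h : finrank K M < Fintype.card ι) : f = 0 := by
  ext v
  exact f.map_linearDependent v fun hv => hv.fintype_card_le_finrank.not_gt h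

section Bianchi

variable {K M N : Type*} [CommRing K] [AddCommGroup M] [Module K M] [AddCommGroup N] [Module K N]

def bianchiMap (R : M →ₗ[K] M →ₗ[K] M →ₗ[K] N) (hR : ∀ x, R x x = 0) :
    M [⋀^Fin 3]→ₗ[K] N where
  toFun v := R (v 0) (v 1) (v 2) + R (v 1) (v 2) (v 0) + R (v 2) (v 0) (v 1)
  map_update_add' {_} v i x y := by
    -- with an abstract `DecidableEq` instance, the kernel rejects the `decide` steps of `simp`
    obtain rfl : ‹DecidableEq (Fin 3)› = instDecidableEqFin 3 := Subsingleton.elim _ _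
    fin_cases i <;> simp <;> abel
  map_update_smul' {_} v i c x := by
    obtain rfl : ‹DecidableEq (Fin 3)› = instDecidableEqFin 3 := Subsingleton.elim _ _
    fin_cases i <;> simp [smul_add]
  map_eq_zero_of_eq' v i j hv hij := by
    have hswap (x y z : M) : R x y z + R y x z = 0 := by
      simpa [hR] using congr($(hR (x + y)) z)
    fin_cases i <;> fin_cases j <;> simp_all

theorem bianchiMap_apply (R : M →ₗ[K] M →ₗ[K] M →ₗ[K] N) (hR : ∀ x, R x x = 0) (x y z : M) :
    bianchiMap R hR ![x, y, z] = R x y z + R y z x + R z x y :=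
  rfl

end Bianchi

theorem bianchi_of_finrank_le_two {K M N : Type*} [Field K] [AddCommGroup M] [Module K M]
    [FiniteDimensional K M] [AddCommGroup N] [Module K N] (hM : finrank K M ≤ 2)
    (R : M →ₗ[K] M →ₗ[K] M →ₗ[K] N) (hR : ∀ x, R x x = 0) (x y z : M) :
    R x y z + R y z x + R z x y = 0 := by
  rw [← bianchiMap_apply R hR,
    AlternatingMap.eq_zero_of_finrank_lt (bianchiMap R hR) (by rw [Fintype.card_fin]; omega)]
  rfl

theorem bianchi_dim_two_general (R : V 2 →ₗ[ℝ] V 2 →ₗ[ℝ] V 2 →ₗ[ℝ] V 2)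
    (halt : ∀ x y, R x y = - R y x)
    (x y z : V 2) :
    R x y z + R y z x + R z x y = 0 := by
  have hR (w : V 2) : R w w = 0 := by
    have h2 : (2 : ℝ) • R w w = 0 := by
      rw [two_smul]
      nth_rw 1 [halt]
      exact neg_add_cancel _
    exact (smul_eq_zero.mp h2).resolve_left two_ne_zero
  exact bianchi_of_finrank_le_two (by simp) R hR x y z

/-- On a 2-dimensional real inner product space, every element of `Λ²V* ⊗ co(V)`
(an alternating bilinear map with values in `co(V) = so(V) ⊕ ℝ·id`) satisfies the
first Bianchi identity. -/
theorem bianchi_dim_two (R : V 2 →ₗ[ℝ] V 2 →ₗ[ℝ] V 2 →ₗ[ℝ] V 2)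
    (halt : ∀ x y, R x y = - R y x)
    (hco : ∀ x y, ∃ c : ℝ, ∀ z w,
      (inner ℝ (R x y z) w : ℝ) + (inner ℝ (R x y w) z : ℝ) = 2 * c * (inner ℝ z w : ℝ))
    (x y z : V 2) :
    R x y z + R y z x + R z x y = 0 :=
  bianchi_dim_two_general R halt x y z
end
end

section
/- Let (M,g) be a Riemannian manifold, θ a smooth 1-form, and ∇' := ∇ᵍ + θ̃ the associated Weyl connection with θ̃_X Y = θ(X)Y + θ(Y)X − g(X,Y)θ♯. Then the curvature tensors satisfy R^{∇'}_{X,Y}Z = R^{∇ᵍ}_{X,Y}Z − ((∇ᵍθ) ∧ id)_{X,Y}Z + [θ♭ ∧ X, θ♭ ∧ Y](Z) + dθ(X,Y)Z for all vector fields X, Y, Z, where (α ∧ X)(W) := α(W)X − g(X,W)α♯ and (A ∧ id)_{X,Y} := A(Y,·)∧X − A(X,·)∧Y. -/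
noncomputable section

/-- An algebraic model of the calculus of vector fields on a Riemannian manifold:
`C` plays the role of the ring of smooth functions, `X` the `C`-module of vector
fields, `act` the derivative of a function along a vector field, `lb` the Lie
bracket, `g` the Riemannian metric and `D` its Levi-Civita connection. -/
structure VFCalc (C : Type*) (X : Type*) [CommRing C] [AddCommGroup X] [Module C X] where
  act : X → C → C
  lb : X → X → X
  g : X → X → C
  D : X → X → X
  g_symm : ∀ y z, g y z = g z y
  g_add : ∀ y z w, g (y + z) w = g y w + g z w
  g_smul : ∀ (f : C) (y z : X), g (f • y) z = f * g y z
  act_add : ∀ (v : X) (f h : C), act v (f + h) = act v f + act v h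
  act_mul : ∀ (v : X) (f h : C), act v (f * h) = act v f * h + f * act v h
  act_addv : ∀ (v w : X) (f : C), act (v + w) f = act v f + act w f
  act_smulv : ∀ (f : C) (v : X) (h : C), act (f • v) h = f * act v h
  act_lb : ∀ (v w : X) (f : C), act v (act w f) - act w (act v f) = act (lb v w) f
  D_addv : ∀ v w y, D (v + w) y = D v y + D w y
  D_add : ∀ v y z, D v (y + z) = D v y + D v z
  D_smulv : ∀ (f : C) v y, D (f • v) y = f • D v y
  D_leib : ∀ (v : X) (f : C) (y : X), D v (f • y) = act v f • y + f • D v y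
  torsion_free : ∀ v w, D v w - D w v = lb v w
  metric : ∀ v y z, act v (g y z) = g (D v y) z + g y (D v z)

variable {C X : Type*} [CommRing C] [AddCommGroup X] [Module C X]

/-- The Weyl connection `∇' = ∇ + θ̃` associated to a 1-form `θ` with `θ♯ = T`:
`∇'_v w = ∇_v w + θ(v)w + θ(w)v − g(v,w)θ♯`. -/
def weylD (P : VFCalc C X) (θ : X → C) (T : X) (v w : X) : X :=
  P.D v w + θ v • w + θ w • v - P.g v w • T

/-- The curvature `R_{v,w}z := D_v D_w z − D_w D_v z − D_{[v,w]}z` of a connection. -/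
def curv (D lb : X → X → X) (v w z : X) : X :=
  D v (D w z) - D w (D v z) - D (lb v w) z

/-- The covariant derivative `(∇θ)(v,w) := v(θ(w)) − θ(∇_v w)` of a 1-form. -/
def nabla1 (P : VFCalc C X) (θ : X → C) (v w : X) : C :=
  P.act v (θ w) - θ (P.D v w)

/-- The exterior derivative `dθ(v,w) := v(θ(w)) − w(θ(v)) − θ([v,w])` of a 1-form. -/
def dform (P : VFCalc C X) (θ : X → C) (v w : X) : C :=
  P.act v (θ w) - P.act w (θ v) - θ (P.lb v w)

/-- The skew endomorphism `(θ ∧ x)(z) := θ(z)x − g(x,z)θ♯`, with `θ♯ = T`. -/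
def wedgeT (P : VFCalc C X) (θ : X → C) (T : X) (x z : X) : X :=
  θ z • x - P.g x z • T

/-!
The Weyl connection differs from `∇ᵍ` by the tensor `θ̃`, and for a torsion-free `∇` and any
tensor `A` the curvature of `∇ + A` is `R_{x,y} + (∇_x A)_y − (∇_y A)_x + [A_x, A_y]`.
For `A = θ̃` the derivative terms give `−((∇ᵍθ) ∧ id)_{x,y}` together with
`((∇ᵍ_x θ)(y) − (∇ᵍ_y θ)(x)) id = dθ(x,y) id`, and since `θ̃_x = θ(x) id + θ ∧ x` with a central
scalar part, `[θ̃_x, θ̃_y] = [θ ∧ x, θ ∧ y]`.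
-/

namespace VFCalc

variable (P : VFCalc C X)

theorem g_sub (y z w : X) : P.g (y - z) w = P.g y w - P.g z w :=
  (AddMonoidHom.mk' (P.g · w) fun y z => P.g_add y z w).map_sub y z

theorem g_add_right (y z w : X) : P.g y (z + w) = P.g y z + P.g y w := by
  rw [P.g_symm, P.g_add, P.g_symm z, P.g_symm w]

theorem g_sub_right (y z w : X) : P.g y (z - w) = P.g y z - P.g y w := by
  rw [P.g_symm, P.g_sub, P.g_symm z, P.g_symm w]

theorem g_smul_right (f : C) (y z : X) : P.g y (f • z) = f * P.g y z := by
  rw [P.g_symm, P.g_smul, P.g_symm]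

theorem D_sub (v y z : X) : P.D v (y - z) = P.D v y - P.D v z :=
  (AddMonoidHom.mk' (P.D v) (P.D_add v)).map_sub y z

end VFCalc

def tensorCovDeriv (D A : X → X → X) (x y z : X) : X :=
  D x (A y z) - A (D x y) z - A y (D x z)

theorem curv_add_tensor {D A lb : X → X → X} (hD : ∀ v y z, D v (y + z) = D v y + D v z)
    (hA_add_left : ∀ v w z, A (v + w) z = A v z + A w z)
    (hA_add_right : ∀ v y z, A v (y + z) = A v y + A v z)
    (hlb : ∀ v w, D v w - D w v = lb v w) (x y z : X) :
    curv (fun v w => D v w + A v w) lb x y z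
      = curv D lb x y z + (tensorCovDeriv D A x y z - tensorCovDeriv D A y x z)
        + (A x (A y z) - A y (A x z)) := by
  have hA_sub : A (D x y - D y x) z = A (D x y) z - A (D y x) z :=
    (AddMonoidHom.mk' (A · z) fun v w => hA_add_left v w z).map_sub _ _
  simp only [curv, tensorCovDeriv, hD, hA_add_right, ← hlb, hA_sub]
  abel

/-- The tensor `θ̃` of the Weyl connection, in the form `θ̃_v = θ(v) id + θ ∧ v`. -/
def weylTensor (P : VFCalc C X) (θ : X → C) (T : X) (v w : X) : X :=
  θ v • w + wedgeT P θ T v w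

section WeylTensor

variable (P : VFCalc C X) (T : X)

theorem weylD_eq_add_weylTensor (θ : X → C) :
    weylD P θ T = fun v w => P.D v w + weylTensor P θ T v w := by
  funext v w
  simp only [weylD, weylTensor, wedgeT]
  abel

theorem tensorCovDeriv_weylTensor (θ : X → C) (x y z : X) :
    tensorCovDeriv P.D (weylTensor P θ T) x y z
      = nabla1 P θ x y • z + nabla1 P θ x z • y - P.g y z • P.D x T := by
  simp only [tensorCovDeriv, weylTensor, wedgeT, nabla1, P.D_add, P.D_sub, P.D_leib, P.metric,
    sub_smul, add_smul]
  abel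

theorem weylTensor_add_left (v w z : X) :
    weylTensor P (P.g T) T (v + w) z = weylTensor P (P.g T) T v z + weylTensor P (P.g T) T w z := by
  simp only [weylTensor, wedgeT, P.g_add_right, P.g_add, smul_add, add_smul]
  abel

theorem weylTensor_add_right (v y z : X) :
    weylTensor P (P.g T) T v (y + z) = weylTensor P (P.g T) T v y + weylTensor P (P.g T) T v z := by
  simp only [weylTensor, wedgeT, P.g_add_right, smul_add, add_smul]
  abel

theorem weylTensor_commutator (x y z : X) :
    weylTensor P (P.g T) T x (weylTensor P (P.g T) T y z)
        - weylTensor P (P.g T) T y (weylTensor P (P.g T) T x z)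
      = wedgeT P (P.g T) T x (wedgeT P (P.g T) T y z)
        - wedgeT P (P.g T) T y (wedgeT P (P.g T) T x z) := by
  simp only [weylTensor, wedgeT, P.g_add_right, P.g_sub_right, P.g_smul_right, smul_add,
    smul_sub, add_smul, sub_smul, smul_smul]
  module

theorem nabla1_sub_swap (x y : X) :
    nabla1 P (P.g T) x y - nabla1 P (P.g T) y x = dform P (P.g T) x y := by
  simp only [nabla1, dform, ← P.torsion_free, P.g_sub_right]
  ring

end WeylTensor

/-- The sharp of `(∇ᵍθ)(y,·)` appears as `∇ᵍ_y θ♯ = P.D y T`. -/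
theorem weyl_curvature_formula (P : VFCalc C X) (θ : X → C) (T : X)
    (hT : ∀ y, P.g T y = θ y) (x y z : X) :
    curv (weylD P θ T) P.lb x y z
      = curv P.D P.lb x y z
        - ((nabla1 P θ y z • x - P.g x z • P.D y T)
            - (nabla1 P θ x z • y - P.g y z • P.D x T))
        + (wedgeT P θ T x (wedgeT P θ T y z) - wedgeT P θ T y (wedgeT P θ T x z))
        + dform P θ x y • z := by
  obtain rfl : θ = P.g T := funext fun y => (hT y).symm
  rw [weylD_eq_add_weylTensor,
    curv_add_tensor P.D_add (weylTensor_add_left P T)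
      (weylTensor_add_right P T) P.torsion_free,
    tensorCovDeriv_weylTensor, tensorCovDeriv_weylTensor, weylTensor_commutator,
    ← nabla1_sub_swap]
  module
end
end

section
/- Let γ: I → M be a smooth regular curve in a Riemannian manifold (M,g) with Levi-Civita connection ∇ᵍ, and set f² := g(γ̇,γ̇). A Weyl connection ∇ = ∇ᵍ + θ̃ along γ satisfies ∇_{γ̇}γ̇ = 0 if and only if the vector field T := θ♯ dual to θ satisfies T = γ̈/f² − 2(f'/f³)γ̇ along γ, where γ̈ := ∇ᵍ_{γ̇}γ̇ and f' := γ̇(f). In particular, the restriction of an adapted Weyl connection's defining 1-form to the curve is unique. -/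
noncomputable section

variable {C X : Type*} [CommRing C] [AddCommGroup X] [Module C X]

/-! Since `g(γ̇,γ̇) = f²` is invertible, `∇_{γ̇}γ̇ = 0` says `T = (γ̈ + 2θ(γ̇)γ̇)/f²`. Pairing this, or
the claimed formula for `T`, with `γ̇` and using `2g(γ̈,γ̇) = (f²)' = 2ff'` forces
`2θ(γ̇) = -2f'/f` in either case, and then the two descriptions of `T` coincide. -/

theorem smul_eq_iff_eq_smul_of_mul_eq_one {R M : Type*} [CommMonoid R] [MulAction R M]
    {a b : R} (hab : a * b = 1) {x y : M} : a • x = y ↔ x = b • y :=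
  smul_eq_iff_eq_inv_smul (⟨a, b, hab, mul_comm b a ▸ hab⟩ : Rˣ)

namespace VFCalc

variable (P : VFCalc C X)

/-- Stated with a factor `2` since `2` need not be invertible in `C`. -/
theorem two_mul_g_D_self {v : X} {f : C} (hf : f * f = P.g v v) :
    2 * P.g (P.D v v) v = 2 * f * P.act v f := by
  have h := P.metric v v v
  rw [← hf, P.act_mul, P.g_symm v (P.D v v)] at h
  linear_combination -h

theorem apply_self_of_sharp_eq_add_smul {θ : X → C} {T S v : X} {c : C} (hT : ∀ y, P.g T y = θ y)
    (h : T = S + c • v) : θ v = P.g S v + c * P.g v v := by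
  rw [← hT, h, P.g_add, P.g_smul]

end VFCalc

theorem weylD_self_eq_zero_iff (P : VFCalc C X) (θ : X → C) (T v : X) :
    weylD P θ T v v = 0 ↔ P.g v v • T = P.D v v + (2 * θ v) • v := by
  rw [weylD, sub_eq_zero, eq_comm, add_assoc, ← add_smul, two_mul]

/-- A Weyl connection `∇ = ∇ᵍ + θ̃` along a regular curve with velocity `γ̇` (with
speed `f`, `f² = g(γ̇,γ̇)`, `f` invertible with inverse `finv`) is adapted, i.e.
`∇_{γ̇}γ̇ = 0`, if and only if `θ♯ = γ̈/f² − 2(f'/f³)γ̇`, where `γ̈ = ∇ᵍ_{γ̇}γ̇` and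
`f' = γ̇(f)`.  In particular the 1-form of an adapted Weyl connection is uniquely
determined along the curve. -/
theorem adapted_weyl_iff (P : VFCalc C X) (γd T : X) (θ : X → C)
    (hT : ∀ y, P.g T y = θ y)
    (f finv : C) (hf : f * f = P.g γd γd) (hfinv : f * finv = 1) :
    weylD P θ T γd γd = 0 ↔
      T = (finv * finv) • P.D γd γd
        - ((2 : C) * P.act γd f * (finv * finv * finv)) • γd := by
  have hsq : (f * f) * (finv * finv) = 1 := by linear_combination (f * finv + 1) * hfinv
  have hγ := P.two_mul_g_D_self hf
  rw [weylD_self_eq_zero_iff, ← hf, smul_eq_iff_eq_smul_of_mul_eq_one hsq, smul_add, smul_smul,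
    sub_eq_add_neg, ← neg_smul]
  constructor
  · intro h
    have hθ : 2 * θ γd = -(2 * P.act γd f * finv) := by
      have h' := P.apply_self_of_sharp_eq_add_smul hT h
      rw [P.g_smul, ← hf] at h'
      linear_combination (-2) * h' - finv ^ 2 * hγ
        + (-4 * θ γd * (f * finv + 1) - 2 * P.act γd f * finv) * hfinv
    rw [h]
    match_scalars
    · rfl
    · linear_combination finv ^ 2 * hθ
  · intro h
    have hθ : 2 * θ γd = -(2 * P.act γd f * finv) := by
      have h' := P.apply_self_of_sharp_eq_add_smul hT h
      rw [P.g_smul, ← hf] at h'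
      linear_combination 2 * h' + finv ^ 2 * hγ
        - 2 * P.act γd f * finv * (2 * f * finv + 1) * hfinv
    rw [h]
    match_scalars
    · rfl
    · linear_combination -finv ^ 2 * hθ
end
end

section
/- Let V be an n-dimensional real inner product space, n ≥ 2, let ν be an inner product space (the normal space), and let T: V ⊗ Sym²₀V → ν be a ν-valued 3-tensor ∇B₀ on V which is symmetric and trace-free in its last two arguments. Suppose there is a linear map a: V → ν with T(X,X,X) = ⟨X,X⟩·a(X) for all X ∈ V (i.e., the total symmetrization of T equals the symmetrization of a ⊗ g). Then 2·δT = (n+2)·a, where (δT)(X) := Σᵢ T(eᵢ, X, eᵢ) for an orthonormal basis {eᵢ} of V. -/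
noncomputable section

/-! Polarizing `T(X,X,X) = ⟨X,X⟩ a(X)` gives
`T(X,Y,Z) + T(Y,X,Z) + T(Z,X,Y) = ⟨Y,Z⟩ a(X) + ⟨X,Z⟩ a(Y) + ⟨X,Y⟩ a(Z)`.
Setting `Y = Z = eᵢ` and summing over `i`, trace-freeness kills the first term and
leaves `2 δT(X) = n a(X) + 2 a(X)`. -/

open scoped InnerProductSpace

section

variable {E ν : Type*} [NormedAddCommGroup E] [InnerProductSpace ℝ E] [AddCommGroup ν] [Module ℝ ν]
  {T : E →ₗ[ℝ] E →ₗ[ℝ] E →ₗ[ℝ] ν} {a : E →ₗ[ℝ] ν}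

theorem trilinear_polarization (hsym : ∀ x y z, T x y z = T x z y)
    (ha : ∀ x, T x x x = ⟪x, x⟫_ℝ • a x) (x y z : E) :
    T x y z + T y x z + T z x y = ⟪y, z⟫_ℝ • a x + ⟪x, z⟫_ℝ • a y + ⟪x, y⟫_ℝ • a z := by
  -- inclusion–exclusion over `x + y + z` isolates twice the mixed part of the cubic form
  have mixed : (2 : ℝ) • (T x y z + T y x z + T z x y) =
      T (x + y + z) (x + y + z) (x + y + z) - T (x + y) (x + y) (x + y)
        - T (y + z) (y + z) (y + z) - T (x + z) (x + z) (x + z) + T x x x + T y y y + T z z z := by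
    simp only [map_add, LinearMap.add_apply]
    rw [hsym y z x, hsym x z y, hsym z y x]
    module
  apply smul_right_injective ν (two_ne_zero (α := ℝ))
  dsimp only
  rw [mixed, ha, ha, ha, ha, ha, ha, ha]
  simp only [inner_add_left, inner_add_right, map_add, real_inner_comm x y, real_inner_comm x z,
    real_inner_comm y z]
  module

theorem two_smul_sum_apply_orthonormalBasis_eq {ι : Type*} [Fintype ι] (b : OrthonormalBasis ι ℝ E)
    (hsym : ∀ x y z, T x y z = T x z y)
    (htf : ∀ x, ∑ i, T x (b i) (b i) = 0) (ha : ∀ x, T x x x = ⟪x, x⟫_ℝ • a x) (x : E) :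
    (2 : ℝ) • ∑ i, T (b i) x (b i) = ((Fintype.card ι : ℝ) + 2) • a x := by
  have traced : ∑ i, (T x (b i) (b i) + T (b i) x (b i) + T (b i) x (b i)) =
      ∑ i, (⟪b i, b i⟫_ℝ • a x + ⟪x, b i⟫_ℝ • a (b i) + ⟪x, b i⟫_ℝ • a (b i)) :=
    Finset.sum_congr rfl fun i _ => trilinear_polarization hsym ha x (b i) (b i)
  have expand : ∑ i, ⟪x, b i⟫_ℝ • a (b i) = a x := by
    conv_rhs => rw [← b.sum_repr' x]
    simp only [map_sum, map_smul, real_inner_comm x]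
  simp only [Finset.sum_add_distrib, htf, b.inner_eq_one, one_smul, expand, Finset.sum_const,
    Finset.card_univ, zero_add] at traced
  rw [two_smul, traced, ← Nat.cast_smul_eq_nsmul ℝ]
  module

end

theorem trace_symmetrized_tensor_general {n : ℕ}
    {ν : Type*} [NormedAddCommGroup ν] [InnerProductSpace ℝ ν]
    (T : V n →ₗ[ℝ] V n →ₗ[ℝ] V n →ₗ[ℝ] ν)
    (hsym : ∀ x y z, T x y z = T x z y)
    (htf : ∀ x, ∑ i, T x (ee n i) (ee n i) = 0)
    (a : V n →ₗ[ℝ] ν)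
    (ha : ∀ x, T x x x = (inner ℝ x x : ℝ) • a x)
    (x : V n) :
    (2 : ℝ) • (∑ i, T (ee n i) x (ee n i)) = ((n : ℝ) + 2) • a x := by
  have hee : ee n = EuclideanSpace.basisFun (Fin n) ℝ := by
    ext1 i; simp [ee]
  rw [hee] at htf ⊢
  simpa using two_smul_sum_apply_orthonormalBasis_eq _ hsym htf ha x

/-- If a ν-valued 3-tensor `T`, symmetric and trace-free in its last two arguments,
satisfies `T(X,X,X) = ⟨X,X⟩·a(X)` for a linear map `a`, then `2·δT = (n+2)·a`. -/
theorem trace_symmetrized_tensor {n : ℕ} (hn : 2 ≤ n)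
    {ν : Type*} [NormedAddCommGroup ν] [InnerProductSpace ℝ ν]
    (T : V n →ₗ[ℝ] V n →ₗ[ℝ] V n →ₗ[ℝ] ν)
    (hsym : ∀ x y z, T x y z = T x z y)
    (htf : ∀ x, ∑ i, T x (ee n i) (ee n i) = 0)
    (a : V n →ₗ[ℝ] ν)
    (ha : ∀ x, T x x x = (inner ℝ x x : ℝ) • a x)
    (x : V n) :
    (2 : ℝ) • (∑ i, T (ee n i) x (ee n i)) = ((n : ℝ) + 2) • a x :=
  trace_symmetrized_tensor_general T hsym htf a ha x
end
end
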